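/- Enforcing the exact beneficiary-share guarantee can force a dominated outcome: in the instance with patients {p1,p2}, categories {c1,c2} with unit quotas, E_{c1} = B_{c1} = {p1}, E_{c2} = {p2}, B_{c2} = ∅, and threshold β* = 0.7, the only non-empty matching μ with |B(μ)|/|E(μ)| ≥ 0.7 matches exactly p1 to c1, and this matching is dominated by the matching assigning p1 to c1 and p2 to c2. -/
import Mathlib


structure Inst (P C : Type) where
  E : C → Finset P
  B : C → Finset P
  hBE : ∀ c, B c ⊆ E c

variable {P C : Type} [DecidableEq P] [Fintype P] [Fintype C]

def IsMatching (I : Inst P C) (μ : C → Option P) : Prop :=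
  (∀ c c' p, μ c = some p → μ c' = some p → c = c') ∧
  ∀ c p, μ c = some p → p ∈ I.E c

def eCount (μ : C → Option P) : ℕ :=
  (Finset.univ.filter fun c => (μ c).isSome).card

def bCount (I : Inst P C) (μ : C → Option P) : ℕ :=
  (Finset.univ.filter fun c => ∃ p ∈ I.B c, μ c = some p).card

def Dominates (I : Inst P C) (μ' μ : C → Option P) : Prop :=
  eCount μ ≤ eCount μ' ∧ bCount I μ ≤ bCount I μ' ∧
    (eCount μ < eCount μ' ∨ bCount I μ < bCount I μ')

def NonDominated (I : Inst P C) (μ : C → Option P) : Prop :=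
  IsMatching I μ ∧ ∀ ν, IsMatching I ν → ¬ Dominates I ν μ

def OnFrontier (I : Inst P C) (e b : ℕ) : Prop :=
  ∃ μ, NonDominated I μ ∧ eCount μ = e ∧ bCount I μ = b

def I10 : Inst (Fin 2) (Fin 2) where
  E := fun c => if c = 0 then {0} else {1}
  B := fun c => if c = 0 then {0} else ∅
  hBE := by intro c; fin_cases c <;> simp

lemma ecount2 (μ : Fin 2 → Option (Fin 2)) :
    eCount μ = (if (μ 0).isSome then 1 else 0) + (if (μ 1).isSome then 1 else 0) := by
  unfold eCount
  rw [Finset.card_filter, Fin.sum_univ_two]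

lemma bcount2 (μ : Fin 2 → Option (Fin 2)) :
    bCount I10 μ = if μ 0 = some 0 then 1 else 0 := by
  unfold bCount
  rw [Finset.card_filter, Fin.sum_univ_two]
  simp [I10]

theorem exact_guarantee_forces_dominated :
    (∀ μ : Fin 2 → Option (Fin 2), IsMatching I10 μ → 0 < eCount μ →
      (7/10 : ℚ) ≤ (bCount I10 μ : ℚ) / (eCount μ : ℚ) →
      μ 0 = some 0 ∧ μ 1 = none) ∧
    Dominates I10 (fun c => if c = 0 then some 0 else some 1)
      (fun c => if c = 0 then some 0 else none) := by
  constructor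
  · intro μ hm he hq
    have h0 : μ 0 = none ∨ μ 0 = some 0 := by
      cases h : μ 0 with
      | none => exact Or.inl rfl
      | some p =>
        have := hm.2 0 p h
        simp [I10] at this
        subst this; exact Or.inr rfl
    have h1 : μ 1 = none ∨ μ 1 = some 1 := by
      cases h : μ 1 with
      | none => exact Or.inl rfl
      | some p =>
        have := hm.2 1 p h
        simp [I10] at this
        subst this; exact Or.inr rfl
    rcases h0 with h0 | h0 <;> rcases h1 with h1 | h1 <;>
        rw [ecount2, bcount2, h0, h1] at hq <;>
        rw [ecount2, h0, h1] at he <;> simp_all <;> norm_num at hq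
  · constructor
    · rw [ecount2, ecount2]; simp
    constructor
    · rw [bcount2, bcount2]; simp
    · left; rw [ecount2, ecount2]; simp
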